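/- arXiv:math/0607310 — 3 statements merged into one kernel-verified Lean document; each statement's English description precedes it below -/
import Mathlib

section
/- Let $0 \le a < b$, set $c = \tfrac{a+b}{2}$, and let $\beta \in (0,1)$ and $K_\beta > 0$. Let $\Upsilon : [a,b] \times [a,b] \to \mathbb{R}$ be measurable and nonnegative, such that for every $\eta \in [a,b]$ the map $\lambda \mapsto \Upsilon(\eta,\lambda)$ is $\beta$-H\"older continuous with constant $K_\beta$, and such that $\eta \mapsto \Upsilon(\eta,\eta)$ is integrable on $[a,b]$. Then $\int_a^b \left( \int_\eta^b \Upsilon(\eta,u)\,du \right) d\eta \;\ge\; \frac{b-a}{2} \int_a^c \Upsilon(\eta,\eta)\,d\eta \;-\; K_\beta (b-a)^{\beta+2}.$ -/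
/-!
On `[a, c]` the Hölder bound keeps `Υ η u` within `M = K_β (b - a)^β` of `Υ η η` for all
`u ∈ [η, b]`, an interval of length at least `(b - a)/2`; so the inner integral is at least
`(b - a)/2 ⋅ Υ η η - (b - a) M`. On `[c, b]` the inner integral is nonnegative and is dropped.
Integrating the first bound over `[a, c]` costs `(b - a)² M / 2 ≤ K_β (b - a)^(β + 2)`.
The same Hölder bound dominates the inner integral by `(|Υ η η| + M)(b - a)`, which together with
joint measurability makes the outer integral a genuine one.
-/

open MeasureTheory Set Function

namespace MeasureTheory.StronglyMeasurable

variable {E : Type*} [NormedAddCommGroup E] [NormedSpace ℝ E]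

theorem setIntegral_prodMk_preimage {α β : Type*} [MeasurableSpace α] [MeasurableSpace β]
    {ν : Measure β} [SFinite ν] {f : α → β → E} (hf : StronglyMeasurable (uncurry f))
    {S : Set (α × β)} (hS : MeasurableSet S) :
    StronglyMeasurable fun x => ∫ y in Prod.mk x ⁻¹' S, f x y ∂ν := by
  convert (hf.indicator hS).integral_prod_right' (ν := ν) using 2 with x
  rw [← integral_indicator (measurable_prodMk_left hS)]
  rfl

theorem intervalIntegral_prod_right {f : ℝ → ℝ → E} (hf : StronglyMeasurable (uncurry f))
    (b : ℝ) : StronglyMeasurable fun x => ∫ y in x..b, f x y := by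
  have hIoc_right : MeasurableSet {p : ℝ × ℝ | p.1 < p.2 ∧ p.2 ≤ b} :=
    (_root_.measurableSet_lt measurable_fst measurable_snd).inter (measurable_snd measurableSet_Iic)
  have hIoc_left : MeasurableSet {p : ℝ × ℝ | b < p.2 ∧ p.2 ≤ p.1} :=
    (measurable_snd measurableSet_Ioi).inter (_root_.measurableSet_le measurable_snd measurable_fst)
  exact (hf.setIntegral_prodMk_preimage hIoc_right).sub (hf.setIntegral_prodMk_preimage hIoc_left)

end MeasureTheory.StronglyMeasurable

lemma abs_sub_le_mul_rpow_of_holderOn_Icc {f : ℝ → ℝ} {a b K β : ℝ} (hK : 0 ≤ K) (hβ : 0 ≤ β)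
    (hf : ∀ x ∈ Icc a b, ∀ y ∈ Icc a b, |f x - f y| ≤ K * |x - y| ^ β)
    {x y : ℝ} (hx : x ∈ Icc a b) (hy : y ∈ Icc a b) :
    |f x - f y| ≤ K * (b - a) ^ β :=
  (hf x hx y hy).trans <| mul_le_mul_of_nonneg_left
    (Real.rpow_le_rpow (abs_nonneg _) (Real.dist_le_of_mem_Icc hx hy) hβ) hK

section Slice

variable {g : ℝ → ℝ} {η b M : ℝ}

lemma abs_le_of_abs_sub_le (hM : ∀ u ∈ Icc η b, |g u - g η| ≤ M) {u : ℝ} (hu : u ∈ Icc η b) :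
    |g u| ≤ |g η| + M := by
  linarith [abs_sub_abs_le_abs_sub (g u) (g η), hM u hu]

lemma intervalIntegrable_of_abs_sub_le (hg : Measurable g) (hηb : η ≤ b)
    (hM : ∀ u ∈ Icc η b, |g u - g η| ≤ M) : IntervalIntegrable g volume η b := by
  rw [intervalIntegrable_iff_integrableOn_Icc_of_le hηb]
  refine Measure.integrableOn_of_bounded measure_Icc_lt_top.ne hg.aestronglyMeasurable
    (M := |g η| + M) ?_
  filter_upwards [ae_restrict_mem measurableSet_Icc] with u hu
  exact abs_le_of_abs_sub_le hM hu

lemma mul_sub_le_intervalIntegral_of_abs_sub_le (hg : Measurable g) (hηb : η ≤ b)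
    (hM : ∀ u ∈ Icc η b, |g u - g η| ≤ M) : (b - η) * (g η - M) ≤ ∫ u in η..b, g u := by
  have hconst : ∫ _ in η..b, (g η - M) ≤ ∫ u in η..b, g u :=
    intervalIntegral.integral_mono_on hηb intervalIntegrable_const
      (intervalIntegrable_of_abs_sub_le hg hηb hM)
      fun u hu => by linarith [(abs_le.mp (hM u hu)).1]
  rwa [intervalIntegral.integral_const, smul_eq_mul] at hconst

lemma norm_intervalIntegral_le_of_abs_sub_le (hηb : η ≤ b)
    (hM : ∀ u ∈ Icc η b, |g u - g η| ≤ M) : ‖∫ u in η..b, g u‖ ≤ (|g η| + M) * (b - η) := by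
  simpa [abs_of_nonneg (sub_nonneg.mpr hηb)] using
    intervalIntegral.norm_integral_le_of_norm_le_const (f := g) fun u hu =>
      abs_le_of_abs_sub_le hM (Ioc_subset_Icc_self ((uIoc_of_le hηb) ▸ hu))

end Slice

lemma intervalIntegral_le_of_le_of_nonneg {f g : ℝ → ℝ} {a b c : ℝ} (hac : a ≤ c) (hcb : c ≤ b)
    (hg : IntervalIntegrable g volume a c) (hf : IntervalIntegrable f volume a b)
    (hgf : ∀ x ∈ Icc a c, g x ≤ f x) (hf₀ : ∀ x ∈ Icc c b, 0 ≤ f x) :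
    ∫ x in a..c, g x ≤ ∫ x in a..b, f x := by
  have hc : c ∈ uIcc a b := mem_uIcc_of_le hac hcb
  have hfac : IntervalIntegrable f volume a c := hf.mono_set (uIcc_subset_uIcc_left hc)
  have hfcb : IntervalIntegrable f volume c b := hf.mono_set (uIcc_subset_uIcc_right hc)
  rw [← intervalIntegral.integral_add_adjacent_intervals hfac hfcb]
  linarith [intervalIntegral.integral_mono_on hac hg hfac hgf,
    intervalIntegral.integral_nonneg (μ := volume) hcb hf₀]

section HolderFamily

variable {Υ : ℝ → ℝ → ℝ} {a b M : ℝ}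

lemma intervalIntegrable_intervalIntegral_of_abs_sub_diag_le
    (hmeas : Measurable (uncurry Υ)) (hdiag : IntegrableOn (fun η => Υ η η) (Icc a b))
    (hab : a ≤ b) (hM : ∀ η ∈ Icc a b, ∀ u ∈ Icc η b, |Υ η u - Υ η η| ≤ M) :
    IntervalIntegrable (fun η => ∫ u in η..b, Υ η u) volume a b := by
  rw [intervalIntegrable_iff_integrableOn_Icc_of_le hab]
  refine Integrable.mono'
    ((hdiag.norm.add (integrableOn_const (C := M) measure_Icc_lt_top.ne)).mul_const (b - a))
    (hmeas.stronglyMeasurable.intervalIntegral_prod_right b).aestronglyMeasurable ?_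
  filter_upwards [ae_restrict_mem measurableSet_Icc] with η hη
  have hM₀ : 0 ≤ M := by simpa using hM η hη η ⟨le_rfl, hη.2⟩
  refine (norm_intervalIntegral_le_of_abs_sub_le hη.2 (hM η hη)).trans ?_
  simp only [Pi.add_apply, Real.norm_eq_abs]
  exact mul_le_mul_of_nonneg_left (by linarith [hη.1]) (by positivity)

lemma half_mul_sub_le_intervalIntegral (hmeas : Measurable (uncurry Υ))
    (hM : ∀ η ∈ Icc a b, ∀ u ∈ Icc η b, |Υ η u - Υ η η| ≤ M)
    (hdiag₀ : ∀ η ∈ Icc a b, 0 ≤ Υ η η) {η : ℝ} (hη : η ∈ Icc a ((a + b) / 2)) :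
    (b - a) / 2 * Υ η η - (b - a) * M ≤ ∫ u in η..b, Υ η u := by
  have hηb : η ≤ b := by linarith [hη.1, hη.2]
  have hη' : η ∈ Icc a b := ⟨hη.1, hηb⟩
  have hM₀ : 0 ≤ M := by simpa using hM η hη' η ⟨le_rfl, hηb⟩
  have hslice := mul_sub_le_intervalIntegral_of_abs_sub_le (g := Υ η)
    (hmeas.comp measurable_prodMk_left) hηb (hM η hη')
  have hhalf : (b - a) / 2 * Υ η η ≤ (b - η) * Υ η η :=
    mul_le_mul_of_nonneg_right (by linarith [hη.2]) (hdiag₀ η hη')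
  have hlen : (b - η) * M ≤ (b - a) * M := mul_le_mul_of_nonneg_right (by linarith [hη.1]) hM₀
  linarith

end HolderFamily

theorem stmt_1_general (a b β Kβ : ℝ) (hab : a < b)
    (hβ : β ∈ Set.Ioo (0:ℝ) 1) (hK : 0 < Kβ) (Υ : ℝ → ℝ → ℝ)
    (hmeas : Measurable (Function.uncurry Υ))
    (hnonneg : ∀ η ∈ Set.Icc a b, ∀ lam ∈ Set.Icc a b, 0 ≤ Υ η lam)
    (hholder : ∀ η ∈ Set.Icc a b, ∀ x ∈ Set.Icc a b, ∀ y ∈ Set.Icc a b,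
      |Υ η x - Υ η y| ≤ Kβ * |x - y| ^ β)
    (hdiag : IntegrableOn (fun η => Υ η η) (Set.Icc a b)) :
    (b - a) / 2 * (∫ η in a..((a + b) / 2), Υ η η) - Kβ * (b - a) ^ (β + 2) ≤
      ∫ η in a..b, (∫ u in η..b, Υ η u) := by
  set M := Kβ * (b - a) ^ β
  have hM₀ : 0 ≤ M := by positivity
  have hM : ∀ η ∈ Icc a b, ∀ u ∈ Icc η b, |Υ η u - Υ η η| ≤ M := fun η hη u hu =>
    abs_sub_le_mul_rpow_of_holderOn_Icc hK.le hβ.1.le (hholder η hη) ⟨hη.1.trans hu.1, hu.2⟩ hη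
  have hdiag_ac : IntervalIntegrable (fun η => Υ η η) volume a ((a + b) / 2) :=
    (intervalIntegrable_iff_integrableOn_Icc_of_le (by linarith)).2
      (hdiag.mono_set (Icc_subset_Icc_right (by linarith)))
  calc (b - a) / 2 * (∫ η in a..((a + b) / 2), Υ η η) - Kβ * (b - a) ^ (β + 2)
      ≤ (b - a) / 2 * (∫ η in a..((a + b) / 2), Υ η η) - (b - a) * M * ((a + b) / 2 - a) := by
        rw [Real.rpow_add (by linarith), Real.rpow_two]
        nlinarith
    _ = ∫ η in a..((a + b) / 2), ((b - a) / 2 * Υ η η - (b - a) * M) := by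
        rw [intervalIntegral.integral_sub (hdiag_ac.const_mul _) intervalIntegrable_const,
          intervalIntegral.integral_const_mul, intervalIntegral.integral_const, smul_eq_mul]
        ring
    _ ≤ ∫ η in a..b, (∫ u in η..b, Υ η u) :=
        intervalIntegral_le_of_le_of_nonneg (by linarith) (by linarith)
          ((hdiag_ac.const_mul _).sub intervalIntegrable_const)
          (intervalIntegrable_intervalIntegral_of_abs_sub_diag_le hmeas hdiag hab.le hM)
          (fun η hη => half_mul_sub_le_intervalIntegral hmeas hM
            (fun η hη => hnonneg η hη η hη) hη)
          (fun η hη => intervalIntegral.integral_nonneg hη.2 fun u hu =>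
            hnonneg η ⟨by linarith [hη.1], hη.2⟩ u ⟨by linarith [hη.1, hu.1], hu.2⟩)

theorem stmt_1 (a b β Kβ : ℝ) (ha : 0 ≤ a) (hab : a < b)
    (hβ : β ∈ Set.Ioo (0:ℝ) 1) (hK : 0 < Kβ) (Υ : ℝ → ℝ → ℝ)
    (hmeas : Measurable (Function.uncurry Υ))
    (hnonneg : ∀ η ∈ Set.Icc a b, ∀ lam ∈ Set.Icc a b, 0 ≤ Υ η lam)
    (hholder : ∀ η ∈ Set.Icc a b, ∀ x ∈ Set.Icc a b, ∀ y ∈ Set.Icc a b,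
      |Υ η x - Υ η y| ≤ Kβ * |x - y| ^ β)
    (hdiag : IntegrableOn (fun η => Υ η η) (Set.Icc a b)) :
    (b - a) / 2 * (∫ η in a..((a + b) / 2), Υ η η) - Kβ * (b - a) ^ (β + 2) ≤
      ∫ η in a..b, (∫ u in η..b, Υ η u) :=
  stmt_1_general a b β Kβ hab hβ hK Υ hmeas hnonneg hholder hdiag
end

section
/- Let $s > 0$, $\beta \in (0,1)$, $K_\beta > 0$, $\alpha_2 > 0$, and let $\nu > 0$ satisfy $\nu \beta > 1$. Set $\varepsilon_0 = 2^{-1/\nu}$ and $\varepsilon_1 = \left( \frac{\alpha_2}{K_\beta\, 4^{\beta+3} s^{\beta+1}} \right)^{1/(\nu\beta - 1)}$. Let $0 < \varepsilon < \min(\varepsilon_0, \varepsilon_1)$, set $n = \lfloor \varepsilon^{-\nu} \rfloor$ and $s_i = \tfrac{i s}{n}$, and fix $i \in \{0, \dots, n-2\}$. Let $\Upsilon : [0,s] \times [0,s] \to \mathbb{R}$ be measurable, nonnegative, with $\lambda \mapsto \Upsilon(\eta,\lambda)$ $\beta$-H\"older continuous with constant $K_\beta$ for every $\eta$, with integrable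 diagonal, and suppose $\int_{s_i}^{s_{i+1}} \Upsilon(\eta,\eta)\,d\eta \ge \frac{\alpha_2 \varepsilon}{2n}$. Then $\int_{s_i}^{s_{i+2}} \left( \int_\eta^{s_{i+2}} \Upsilon(\eta,u)\,du \right) d\eta \;\ge\; \frac{\alpha_2 s}{4}\, \varepsilon^{1+2\nu}.$ -/
/-!
With mesh `h = s / n`, Hölder continuity of `Υ η` keeps `Υ η u ≥ Υ η η - K h ^ β` for
`u ∈ [η, η + h]`, so for `η ∈ [s_i, s_{i+1}]` the inner integral is at least
`h (Υ η η - K h ^ β)` (nonnegativity handles the rest of `[η, s_{i+2}]`). Integrating over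
`[s_i, s_{i+1}]` and using the lower bound on the diagonal integral gives
`h α₂ ε / (2n) - h² K h ^ β`. Since `n = ⌊ε ^ (-ν)⌋` we have `s ε ^ ν ≤ h ≤ 2 s ε ^ ν`, and the
choice `ε < ε₁` makes the Hölder error at most half the main term.
-/

open MeasureTheory Set Filter Topology Function

lemma continuousOn_of_abs_sub_le_mul_rpow {f : ℝ → ℝ} {S : Set ℝ} {K β : ℝ} (hβ : 0 < β)
    (hf : ∀ x ∈ S, ∀ y ∈ S, |f x - f y| ≤ K * |x - y| ^ β) : ContinuousOn f S := by
  intro x hx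
  have hcont : Continuous fun y : ℝ => K * |y - x| ^ β :=
    continuous_const.mul ((continuous_id.sub continuous_const).abs.rpow_const
      fun _ => Or.inr hβ.le)
  have hlim : Tendsto (fun y => K * |y - x| ^ β) (𝓝[S] x) (𝓝 0) := by
    simpa [Real.zero_rpow hβ.ne'] using (hcont.tendsto x).mono_left nhdsWithin_le_nhds
  rw [ContinuousWithinAt, tendsto_iff_norm_sub_tendsto_zero]
  exact squeeze_zero' (Eventually.of_forall fun _ => norm_nonneg _)
    (eventually_nhdsWithin_of_forall fun y hy => hf y hy x hx) hlim

lemma mul_sub_rpow_le_integral_of_abs_sub_le {f : ℝ → ℝ} {c h b K β : ℝ} (hβ : 0 < β)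
    (hK : 0 ≤ K) (hh : 0 ≤ h) (hcb : c + h ≤ b) (hf₀ : ∀ u ∈ Icc c b, 0 ≤ f u)
    (hf : ∀ x ∈ Icc c b, ∀ y ∈ Icc c b, |f x - f y| ≤ K * |x - y| ^ β) :
    h * (f c - K * h ^ β) ≤ ∫ u in c..b, f u := by
  have hint : IntervalIntegrable f volume c b :=
    (continuousOn_of_abs_sub_le_mul_rpow hβ hf).intervalIntegrable_of_Icc (by linarith)
  calc h * (f c - K * h ^ β) = ∫ _ in c..c + h, (f c - K * h ^ β) := by
        rw [intervalIntegral.integral_const, add_sub_cancel_left, smul_eq_mul]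
    _ ≤ ∫ u in c..c + h, f u := by
        refine intervalIntegral.integral_mono_on (by linarith) intervalIntegrable_const
          (hint.mono_set (uIcc_subset_uIcc_left (by rw [uIcc_of_le (by linarith)]; exact
            ⟨by linarith, hcb⟩))) fun u hu => ?_
        have hdist : |c - u| ≤ h := by rw [abs_sub_comm, abs_of_nonneg] <;> linarith [hu.1, hu.2]
        have hK' : K * |c - u| ^ β ≤ K * h ^ β := by gcongr
        linarith [le_abs_self (f c - f u), hf c ⟨le_rfl, by linarith⟩ u ⟨hu.1, hu.2.trans hcb⟩]
    _ ≤ ∫ u in c..b, f u :=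
        intervalIntegral.integral_mono_interval le_rfl (by linarith) hcb
          ((ae_restrict_iff' measurableSet_Ioc).2 (Eventually.of_forall fun u hu =>
            hf₀ u (Ioc_subset_Icc_self hu))) hint

lemma stronglyMeasurable_intervalIntegral_of_measurable_uncurry {F : ℝ → ℝ → ℝ}
    (hF : Measurable (uncurry F)) (b : ℝ) : StronglyMeasurable fun η => ∫ u in η..b, F η u := by
  have hset : ∀ t : Set (ℝ × ℝ), MeasurableSet t →
      StronglyMeasurable fun η => ∫ u, t.indicator (uncurry F) (η, u) := fun t ht =>
    (hF.indicator ht).stronglyMeasurable.integral_prod_right'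
  have hpos := hset {p | p.1 < p.2 ∧ p.2 ≤ b}
    ((measurableSet_lt measurable_fst measurable_snd).inter
      (measurableSet_le measurable_snd measurable_const))
  have hneg := hset {p | b < p.2 ∧ p.2 ≤ p.1}
    ((measurableSet_lt measurable_const measurable_snd).inter
      (measurableSet_le measurable_snd measurable_fst))
  convert hpos.sub hneg using 1
  funext η
  -- at each `η` the two sets slice to `Ioc η b` and `Ioc b η`, so the indicators agree by unfolding
  simp only [intervalIntegral, Pi.sub_apply, ← integral_indicator measurableSet_Ioc]
  congr 1

lemma intervalIntegrable_intervalIntegral_of_abs_le {F : ℝ → ℝ → ℝ} {g : ℝ → ℝ} {a b : ℝ}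
    (hab : a ≤ b) (hF : Measurable (uncurry F)) (hg : IntegrableOn g (Icc a b))
    (hFg : ∀ η ∈ Icc a b, ∀ u ∈ Icc a b, |F η u| ≤ g η) :
    IntervalIntegrable (fun η => ∫ u in η..b, F η u) volume a b := by
  rw [intervalIntegrable_iff_integrableOn_Icc_of_le hab]
  refine Integrable.mono' (hg.const_mul (b - a))
    (stronglyMeasurable_intervalIntegral_of_measurable_uncurry hF b).aestronglyMeasurable
    ((ae_restrict_iff' measurableSet_Icc).2 (Eventually.of_forall fun η hη => ?_))
  have hbound : ∀ u ∈ uIoc η b, ‖F η u‖ ≤ g η := fun u hu => by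
    rw [uIoc_of_le hη.2] at hu
    exact hFg η hη u ⟨hη.1.trans hu.1.le, hu.2⟩
  calc ‖∫ u in η..b, F η u‖ ≤ g η * |b - η| :=
        intervalIntegral.norm_integral_le_of_norm_le_const hbound
    _ ≤ g η * (b - a) := by
        have := (abs_nonneg _).trans (hFg η hη η hη)
        rw [abs_of_nonneg (by linarith [hη.2])]
        gcongr
        linarith [hη.1]
    _ = (b - a) * g η := mul_comm _ _

lemma mul_integral_diag_sub_le_integral_integral {Υ : ℝ → ℝ → ℝ} {a h K β : ℝ} (hβ : 0 < β)
    (hK : 0 ≤ K) (hh : 0 ≤ h) (hmeas : Measurable (uncurry Υ))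
    (hnonneg : ∀ η ∈ Icc a (a + 2 * h), ∀ u ∈ Icc a (a + 2 * h), 0 ≤ Υ η u)
    (hholder : ∀ η ∈ Icc a (a + 2 * h), ∀ x ∈ Icc a (a + 2 * h), ∀ y ∈ Icc a (a + 2 * h),
      |Υ η x - Υ η y| ≤ K * |x - y| ^ β)
    (hdiag : IntegrableOn (fun η => Υ η η) (Icc a (a + 2 * h))) :
    h * (∫ η in a..a + h, Υ η η) - h * h * (K * h ^ β) ≤
      ∫ η in a..a + 2 * h, ∫ u in η..a + 2 * h, Υ η u := by
  set b := a + 2 * h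
  have hbound : ∀ η ∈ Icc a b, ∀ u ∈ Icc a b, |Υ η u| ≤ Υ η η + K * (2 * h) ^ β := by
    intro η hη u hu
    have hdist : |u - η| ≤ 2 * h := abs_le.2 ⟨by linarith [hη.2, hu.1], by linarith [hη.1, hu.2]⟩
    have hK' : K * |u - η| ^ β ≤ K * (2 * h) ^ β := by gcongr
    rw [abs_of_nonneg (hnonneg η hη u hu)]
    linarith [le_abs_self (Υ η u - Υ η η), hholder η hη u hu η hη]
  have hG : IntervalIntegrable (fun η => ∫ u in η..b, Υ η u) volume a b :=
    intervalIntegrable_intervalIntegral_of_abs_le (by linarith) hmeas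
      (hdiag.add (integrableOn_const measure_Icc_lt_top.ne)) hbound
  have hsub : Icc a (a + h) ⊆ Icc a b := Icc_subset_Icc_right (by linarith)
  have hdiag' : IntervalIntegrable (fun η => Υ η η) volume a (a + h) :=
    (intervalIntegrable_iff_integrableOn_Icc_of_le (by linarith)).2 (hdiag.mono_set hsub)
  have hpoint : ∀ η ∈ Icc a (a + h), h * (Υ η η - K * h ^ β) ≤ ∫ u in η..b, Υ η u := by
    intro η hη
    have hsub' : Icc η b ⊆ Icc a b := Icc_subset_Icc_left hη.1
    exact mul_sub_rpow_le_integral_of_abs_sub_le hβ hK hh (by linarith [hη.2])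
      (fun u hu => hnonneg η (hsub hη) u (hsub' hu))
      (fun x hx y hy => hholder η (hsub hη) x (hsub' hx) y (hsub' hy))
  calc h * (∫ η in a..a + h, Υ η η) - h * h * (K * h ^ β)
      = ∫ η in a..a + h, h * (Υ η η - K * h ^ β) := by
        rw [intervalIntegral.integral_const_mul,
          intervalIntegral.integral_sub hdiag' intervalIntegrable_const]
        simp only [intervalIntegral.integral_const, add_sub_cancel_left, smul_eq_mul]
        ring
    _ ≤ ∫ η in a..a + h, ∫ u in η..b, Υ η u :=
        intervalIntegral.integral_mono_on (by linarith)
          ((hdiag'.sub intervalIntegrable_const).const_mul h)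
          (hG.mono_set (uIcc_subset_uIcc_left (by rw [uIcc_of_le (by linarith)]; exact
            ⟨by linarith, by linarith⟩))) hpoint
    _ ≤ ∫ η in a..b, ∫ u in η..b, Υ η u :=
        intervalIntegral.integral_mono_interval le_rfl (by linarith) (by linarith)
          ((ae_restrict_iff' measurableSet_Ioc).2 (Eventually.of_forall fun η hη =>
            intervalIntegral.integral_nonneg hη.2 fun u hu =>
              hnonneg η (Ioc_subset_Icc_self hη) u ⟨hη.1.le.trans hu.1, hu.2⟩)) hG

lemma mul_mul_rpow_le_of_rpow_sub_one_le {K s α ε ν β h : ℝ} (hK : 0 < K) (hs : 0 < s)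
    (hε : 0 < ε) (hβ : 0 ≤ β) (hh : 0 ≤ h) (hh' : h ≤ 2 * (s * ε ^ ν))
    (hε' : ε ^ (ν * β - 1) ≤ α / (K * 4 ^ (β + 3) * s ^ (β + 1))) :
    K * s * h ^ β ≤ α * ε / 4 := by
  have hα : 0 ≤ α := by
    by_contra! hα
    have : α / (K * 4 ^ (β + 3) * s ^ (β + 1)) < 0 := div_neg_of_neg_of_pos hα (by positivity)
    linarith [Real.rpow_pos_of_pos hε (ν * β - 1)]
  have h4 : (4 : ℝ) ^ (β + 3) = 4 ^ β * 64 := by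
    rw [Real.rpow_add (by norm_num)]; norm_num
  have h24 : (2 : ℝ) ^ β ≤ 4 ^ β := Real.rpow_le_rpow (by norm_num) (by norm_num) hβ
  calc K * s * h ^ β ≤ K * s * (2 * (s * ε ^ ν)) ^ β := by gcongr
    _ = 2 ^ β * (K * s ^ (β + 1)) * ε ^ (ν * β - 1) * ε := by
        rw [Real.mul_rpow (by norm_num) (by positivity), Real.mul_rpow hs.le (by positivity),
          ← Real.rpow_mul hε.le, Real.rpow_add_one hs.ne', Real.rpow_sub_one hε.ne']
        field_simp
    _ ≤ 2 ^ β * (K * s ^ (β + 1)) * (α / (K * 4 ^ (β + 3) * s ^ (β + 1))) * ε := by gcongr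
    _ = 2 ^ β / 4 ^ (β + 3) * (α * ε) := by field_simp
    _ ≤ α * ε / 4 := by
        rw [h4, div_mul_eq_mul_div, div_le_div_iff₀ (by positivity) (by norm_num)]
        have : 0 ≤ α * ε * 4 ^ β := by positivity
        nlinarith [mul_le_mul_of_nonneg_left h24 (mul_nonneg hα hε.le)]

lemma two_lt_rpow_neg_of_lt_two_rpow {ε ν : ℝ} (hε : 0 < ε) (hν : 0 < ν)
    (hε' : ε < 2 ^ (-1 / ν)) : 2 < ε ^ (-ν) := by
  rwa [show -1 / ν = (-ν)⁻¹ by rw [inv_neg, neg_div, one_div],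
    Real.lt_rpow_inv_iff_of_neg hε two_pos (neg_neg_of_pos hν)] at hε'

lemma div_le_div_floor {s x : ℝ} (hs : 0 ≤ s) (hx : 1 ≤ x) : s / x ≤ s / ⌊x⌋₊ :=
  div_le_div_of_nonneg_left hs (by exact_mod_cast Nat.floor_pos.2 hx) (Nat.floor_le (by linarith))

lemma div_floor_le_two_mul_div {s x : ℝ} (hs : 0 ≤ s) (hx : 1 ≤ x) :
    s / ⌊x⌋₊ ≤ 2 * (s / x) := by
  have hfloor : (1 : ℝ) ≤ ⌊x⌋₊ := by exact_mod_cast Nat.one_le_floor_iff x |>.2 hx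
  have hx2 : x ≤ 2 * ⌊x⌋₊ := by linarith [Nat.lt_floor_add_one x]
  rw [div_le_iff₀ (by linarith), show 2 * (s / x) * ⌊x⌋₊ = s * (2 * ⌊x⌋₊ / x) by ring]
  exact le_mul_of_one_le_right hs ((one_le_div (by linarith)).2 hx2)

theorem stmt_2 (s β Kβ α₂ ν : ℝ) (hs : 0 < s) (hβ : β ∈ Set.Ioo (0:ℝ) 1)
    (hK : 0 < Kβ) (hα₂ : 0 < α₂) (hν : 0 < ν) (hνβ : 1 < ν * β)
    (ε : ℝ) (hε : 0 < ε)
    (hε' : ε < min ((2:ℝ) ^ (-1 / ν))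
      ((α₂ / (Kβ * (4:ℝ) ^ (β + 3) * s ^ (β + 1))) ^ (1 / (ν * β - 1))))
    (n : ℕ) (hn : n = ⌊ε ^ (-ν)⌋₊) (i : ℕ) (hi : i ≤ n - 2)
    (Υ : ℝ → ℝ → ℝ) (hmeas : Measurable (Function.uncurry Υ))
    (hnonneg : ∀ η ∈ Set.Icc 0 s, ∀ lam ∈ Set.Icc 0 s, 0 ≤ Υ η lam)
    (hholder : ∀ η ∈ Set.Icc 0 s, ∀ x ∈ Set.Icc 0 s, ∀ y ∈ Set.Icc 0 s,
      |Υ η x - Υ η y| ≤ Kβ * |x - y| ^ β)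
    (hdiag : IntegrableOn (fun η => Υ η η) (Set.Icc 0 s))
    (hlow : α₂ * ε / (2 * n) ≤ ∫ η in ((i : ℝ) * s / n)..(((i : ℝ) + 1) * s / n), Υ η η) :
    α₂ * s / 4 * ε ^ (1 + 2 * ν) ≤
      ∫ η in ((i : ℝ) * s / n)..(((i : ℝ) + 2) * s / n),
        (∫ u in η..(((i : ℝ) + 2) * s / n), Υ η u) := by
  obtain ⟨hβ0, -⟩ := hβ
  have hx := two_lt_rpow_neg_of_lt_two_rpow hε hν (hε'.trans_le (min_le_left _ _))
  have hεc : ε ^ (ν * β - 1) ≤ α₂ / (Kβ * 4 ^ (β + 3) * s ^ (β + 1)) := by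
    have := hε'.trans_le (min_le_right _ _)
    rw [one_div, Real.lt_rpow_inv_iff_of_pos hε.le (by positivity) (by linarith)] at this
    exact this.le
  have hn2 : 2 ≤ n := hn ▸ Nat.le_floor (by exact_mod_cast hx.le)
  have hsε : s * ε ^ ν = s / ε ^ (-ν) := by rw [Real.rpow_neg hε.le, div_inv_eq_mul]
  have hh_lo : s * ε ^ ν ≤ s / n := hsε ▸ hn ▸ div_le_div_floor hs.le (by linarith)
  have hh_hi : s / n ≤ 2 * (s * ε ^ ν) := hsε ▸ hn ▸ div_floor_le_two_mul_div hs.le (by linarith)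
  have hkey := mul_mul_rpow_le_of_rpow_sub_one_le hK hs hε hβ0.le (by positivity) hh_hi hεc
  have hn0 : (0 : ℝ) < n := by exact_mod_cast (by omega : 0 < n)
  have hin : (i : ℝ) + 2 ≤ n := by exact_mod_cast (by omega : i + 2 ≤ n)
  set a := (i : ℝ) * s / n
  set h := s / n
  rw [show ((i : ℝ) + 1) * s / n = a + h by ring] at hlow
  rw [show ((i : ℝ) + 2) * s / n = a + 2 * h by ring]
  have hsub : Icc a (a + 2 * h) ⊆ Icc 0 s := Icc_subset_Icc (by positivity) (by
    rw [show a + 2 * h = ((i : ℝ) + 2) * s / n by ring, div_le_iff₀ hn0]; nlinarith)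
  have hmain := mul_integral_diag_sub_le_integral_integral hβ0 hK.le (by positivity) hmeas
    (fun η hη u hu => hnonneg η (hsub hη) u (hsub hu))
    (fun η hη x hx y hy => hholder η (hsub hη) x (hsub hx) y (hsub hy)) (hdiag.mono_set hsub)
  have hK' : Kβ * h ^ β ≤ α₂ * ε / (4 * s) := by
    rw [le_div_iff₀ (by positivity)]; linarith
  calc α₂ * s / 4 * ε ^ (1 + 2 * ν) = α₂ * ε / (4 * s) * (s * ε ^ ν) ^ 2 := by
        rw [Real.rpow_add hε, Real.rpow_one, show 2 * ν = ν * (2 : ℕ) by push_cast; ring,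
          Real.rpow_mul_natCast hε.le]
        field_simp
    _ ≤ α₂ * ε / (4 * s) * h ^ 2 := by gcongr
    _ = h * (α₂ * ε / (2 * n)) - h * h * (α₂ * ε / (4 * s)) := by
        simp only [h]; field_simp; ring
    _ ≤ h * (∫ η in a..a + h, Υ η η) - h * h * (Kβ * h ^ β) := by gcongr
    _ ≤ _ := hmain
end

section
/- Let $0 \le a < b$, $\beta \in (0,1)$, $K'_\beta > 0$, $\mathcal{K} > 0$, and let $m \ge 1$ be an integer. Let $Y : [a,b] \times [a,b] \to \mathbb{R}$ be measurable with $\lambda \mapsto Y(\eta,\lambda)$ $\beta$-H\"older continuous with constant $K'_\beta$ for every $\eta$ and with $\eta \mapsto Y(\eta,\eta)^2$ integrable; let $\Psi^j : [a,b] \times [a,b] \to \mathbb{R}$, $1 \le j \le m$, be measurable with $|\Psi^j| \le \mathcal{K}$; and let $\Theta^{j,k} : [a,b] \to \mathbb{R}$, $1 \le j,k \le m$, be measurable with $|\Theta^{j,k}| \le \mathcal{K}$. Then $\left| 4 \sum_{j,k=1}^m \int_a^b \left( \int_\eta^b Y(\eta,u) \Psi^j(\eta,u)\, du \right) \left( \int_\eta^b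 Y(\eta,u) \Psi^k(\eta,u)\, du \right) \Theta^{j,k}(\eta)\, d\eta \right| \;\le\; 8 m^2 \mathcal{K}^3 (b-a)^2 \int_a^b Y(\eta,\eta)^2\, d\eta \;+\; 8 m^2 \mathcal{K}^3 (K'_\beta)^2 (b-a)^{2\beta+3}.$ -/
open MeasureTheory Set

/-!
Each inner integral is bounded by `K (b - a) (|Y(η,η)| + K'β (b - a)^β)`, since Hölder continuity
keeps `Y(η,·)` within `K'β (b - a)^β` of its diagonal value on `[η, b]`. Multiplying two such
bounds and `|Θ| ≤ K`, and using `(x + y)² ≤ 2 (x² + y²)`, bounds each integrand by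
`2 K³ (b - a)² (Y(η,η)² + K'β² (b - a)^{2β})`; integrating and summing the `m²` terms gives the
claim.
-/

lemma abs_le_abs_add_of_holderOn {f : ℝ → ℝ} {a b β C : ℝ} (hβ : 0 ≤ β) (hC : 0 ≤ C)
    (hf : ∀ x ∈ Icc a b, ∀ y ∈ Icc a b, |f x - f y| ≤ C * |x - y| ^ β)
    {x y : ℝ} (hx : x ∈ Icc a b) (hy : y ∈ Icc a b) :
    |f x| ≤ |f y| + C * (b - a) ^ β := by
  have hxy : |x - y| ≤ b - a := abs_sub_le_of_le_of_le hx.1 hx.2 hy.1 hy.2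
  calc |f x| ≤ |f y| + |f x - f y| := by linarith [abs_sub_abs_le_abs_sub (f x) (f y)]
    _ ≤ |f y| + C * |x - y| ^ β := by gcongr; exact hf x hx y hy
    _ ≤ |f y| + C * (b - a) ^ β := by gcongr

lemma abs_integral_mul_le_of_holderOn {f ψ : ℝ → ℝ} {a b β C K η : ℝ} (hβ : 0 ≤ β)
    (hC : 0 ≤ C) (hf : ∀ x ∈ Icc a b, ∀ y ∈ Icc a b, |f x - f y| ≤ C * |x - y| ^ β)
    (hψ : ∀ u, |ψ u| ≤ K) (hη : η ∈ Icc a b) :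
    |∫ u in η..b, f u * ψ u| ≤ K * (b - a) * (|f η| + C * (b - a) ^ β) := by
  have hK : 0 ≤ K := (abs_nonneg _).trans (hψ 0)
  have hM : 0 ≤ |f η| + C * (b - a) ^ β :=
    (abs_nonneg _).trans (abs_le_abs_add_of_holderOn hβ hC hf hη hη)
  have hbound := intervalIntegral.norm_integral_le_of_norm_le_const
    (a := η) (b := b) (C := (|f η| + C * (b - a) ^ β) * K) (f := fun u => f u * ψ u)
    fun u hu => by
      rw [uIoc_of_le hη.2] at hu
      rw [Real.norm_eq_abs, abs_mul]
      have hu' : u ∈ Icc a b := ⟨hη.1.trans hu.1.le, hu.2⟩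
      exact mul_le_mul (abs_le_abs_add_of_holderOn hβ hC hf hu' hη) (hψ u) (abs_nonneg _) hM
  rw [Real.norm_eq_abs, abs_of_nonneg (sub_nonneg.2 hη.2)] at hbound
  calc _ ≤ (|f η| + C * (b - a) ^ β) * K * (b - η) := hbound
    _ ≤ (|f η| + C * (b - a) ^ β) * K * (b - a) :=
      mul_le_mul_of_nonneg_left (by linarith [hη.1]) (mul_nonneg hM hK)
    _ = _ := by ring

lemma abs_mul_mul_le_sq_add_sq {p q r y c K L : ℝ} (hp : |p| ≤ L * (|y| + c))
    (hq : |q| ≤ L * (|y| + c)) (hr : |r| ≤ K) :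
    |p * q * r| ≤ 2 * K * L ^ 2 * (y ^ 2 + c ^ 2) := by
  have hK : 0 ≤ K := (abs_nonneg _).trans hr
  calc |p * q * r| = |p| * |q| * |r| := by rw [abs_mul, abs_mul]
    _ ≤ L * (|y| + c) * (L * (|y| + c)) * K :=
      mul_le_mul (mul_le_mul hp hq (abs_nonneg _) ((abs_nonneg _).trans hp)) hr (abs_nonneg _)
        (mul_self_nonneg _)
    _ = K * L ^ 2 * (|y| + c) ^ 2 := by ring
    _ ≤ K * L ^ 2 * (2 * (|y| ^ 2 + c ^ 2)) := by gcongr; exact add_sq_le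
    _ = 2 * K * L ^ 2 * (y ^ 2 + c ^ 2) := by rw [sq_abs]; ring

lemma abs_sum_sum_le {ι : Type*} [Fintype ι] {F : ι → ι → ℝ} {B : ℝ}
    (h : ∀ i j, |F i j| ≤ B) : |∑ i, ∑ j, F i j| ≤ Fintype.card ι ^ 2 * B := by
  rw [← Fintype.sum_prod_type']
  calc |∑ p : ι × ι, F p.1 p.2| ≤ ∑ p : ι × ι, |F p.1 p.2| := Finset.abs_sum_le_sum_abs _ _
    _ ≤ ∑ _p : ι × ι, B := Finset.sum_le_sum fun p _ => h p.1 p.2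
    _ = Fintype.card ι ^ 2 * B := by simp [Fintype.card_prod, sq]

lemma abs_intervalIntegral_le_integral {f g : ℝ → ℝ} {a b : ℝ} (hab : a ≤ b)
    (hg : IntervalIntegrable g volume a b) (h : ∀ x ∈ Ioc a b, |f x| ≤ g x) :
    |∫ x in a..b, f x| ≤ ∫ x in a..b, g x :=
  intervalIntegral.norm_integral_le_of_norm_le (f := f) hab (.of_forall h) hg

theorem stmt_6_general (a b β K'β K : ℝ) (hab : a < b)
    (hβ : β ∈ Set.Ioo (0:ℝ) 1) (hK' : 0 < K'β)
    (m : ℕ)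
    (Y : ℝ → ℝ → ℝ)
    (hholder : ∀ η ∈ Set.Icc a b, ∀ x ∈ Set.Icc a b, ∀ y ∈ Set.Icc a b,
      |Y η x - Y η y| ≤ K'β * |x - y| ^ β)
    (hdiag : IntegrableOn (fun η => (Y η η) ^ 2) (Set.Icc a b))
    (Ψ : Fin m → ℝ → ℝ → ℝ)
    (hΨbound : ∀ j x y, |Ψ j x y| ≤ K)
    (Θ : Fin m → Fin m → ℝ → ℝ)
    (hΘbound : ∀ j k x, |Θ j k x| ≤ K) :
    |4 * ∑ j, ∑ k, ∫ η in a..b,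
        (∫ u in η..b, Y η u * Ψ j η u) * (∫ u in η..b, Y η u * Ψ k η u) * Θ j k η| ≤
      8 * (m : ℝ) ^ 2 * K ^ 3 * (b - a) ^ 2 * (∫ η in a..b, (Y η η) ^ 2)
        + 8 * (m : ℝ) ^ 2 * K ^ 3 * K'β ^ 2 * (b - a) ^ (2 * β + 3) := by
  set c := K'β * (b - a) ^ β
  have hYY : IntervalIntegrable (fun η => (Y η η) ^ 2) volume a b :=
    (intervalIntegrable_iff_integrableOn_Icc_of_le hab.le).2 hdiag
  have hterm : ∀ j k, |∫ η in a..b,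
      (∫ u in η..b, Y η u * Ψ j η u) * (∫ u in η..b, Y η u * Ψ k η u) * Θ j k η| ≤
      ∫ η in a..b, 2 * K * (K * (b - a)) ^ 2 * ((Y η η) ^ 2 + c ^ 2) := by
    intro j k
    refine abs_intervalIntegral_le_integral hab.le
      ((hYY.add intervalIntegrable_const).const_mul _) fun η hη => ?_
    have hinner := fun i => abs_integral_mul_le_of_holderOn hβ.1.le hK'.le
      (hholder η (Ioc_subset_Icc_self hη)) (hΨbound i η) (Ioc_subset_Icc_self hη)
    exact abs_mul_mul_le_sq_add_sq (hinner j) (hinner k) (hΘbound j k η)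
  have hpow : (b - a) ^ (2 * β + 3) = ((b - a) ^ β) ^ 2 * (b - a) ^ 3 := by
    rw [show 2 * β + 3 = β * (2 : ℕ) + (3 : ℕ) by push_cast; ring,
      Real.rpow_add_natCast (sub_pos.2 hab).ne', Real.rpow_mul_natCast (sub_pos.2 hab).le]
  calc _ = 4 * |∑ j, ∑ k, ∫ η in a..b,
        (∫ u in η..b, Y η u * Ψ j η u) * (∫ u in η..b, Y η u * Ψ k η u) * Θ j k η| := by
        rw [abs_mul, abs_of_pos four_pos]
    _ ≤ 4 * (m ^ 2 * ∫ η in a..b, 2 * K * (K * (b - a)) ^ 2 * ((Y η η) ^ 2 + c ^ 2)) := by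
        gcongr
        simpa using abs_sum_sum_le hterm
    _ = _ := by
        rw [intervalIntegral.integral_const_mul, intervalIntegral.integral_add hYY
          intervalIntegrable_const, intervalIntegral.integral_const, smul_eq_mul, hpow]
        ring

theorem stmt_6 (a b β K'β K : ℝ) (ha : 0 ≤ a) (hab : a < b)
    (hβ : β ∈ Set.Ioo (0:ℝ) 1) (hK' : 0 < K'β) (hK : 0 < K)
    (m : ℕ) (hm : 1 ≤ m)
    (Y : ℝ → ℝ → ℝ) (hYmeas : Measurable (Function.uncurry Y))
    (hholder : ∀ η ∈ Set.Icc a b, ∀ x ∈ Set.Icc a b, ∀ y ∈ Set.Icc a b,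
      |Y η x - Y η y| ≤ K'β * |x - y| ^ β)
    (hdiag : IntegrableOn (fun η => (Y η η) ^ 2) (Set.Icc a b))
    (Ψ : Fin m → ℝ → ℝ → ℝ) (hΨmeas : ∀ j, Measurable (Function.uncurry (Ψ j)))
    (hΨbound : ∀ j x y, |Ψ j x y| ≤ K)
    (Θ : Fin m → Fin m → ℝ → ℝ) (hΘmeas : ∀ j k, Measurable (Θ j k))
    (hΘbound : ∀ j k x, |Θ j k x| ≤ K) :
    |4 * ∑ j, ∑ k, ∫ η in a..b,
        (∫ u in η..b, Y η u * Ψ j η u) * (∫ u in η..b, Y η u * Ψ k η u) * Θ j k η| ≤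
      8 * (m : ℝ) ^ 2 * K ^ 3 * (b - a) ^ 2 * (∫ η in a..b, (Y η η) ^ 2)
        + 8 * (m : ℝ) ^ 2 * K ^ 3 * K'β ^ 2 * (b - a) ^ (2 * β + 3) :=
  stmt_6_general a b β K'β K hab hβ hK' m Y hholder hdiag Ψ hΨbound Θ hΘbound
end
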